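/- For every m ∈ ℕ, every list L of natural numbers, every n, k ∈ ℕ with k < m: next_m applied to the list consisting of n copies of m followed by (k :: L) equals the list consisting of (n+1) copies of (k+1) followed by L. -/

import Mathlib

def next (m : ℕ) : List ℕ → List ℕ
  | [] => [0]
  | h :: t =>
    if h < m then (h + 1) :: t
    else
      match next m t with
      | [] => []
      | x :: t' => x :: x :: t'

def lgen (m : ℕ) : ℕ → List ℕ
  | 0 => []
  | n + 1 => next m (lgen m n)

theorem next_cons_of_lt {m h : ℕ} (t : List ℕ) (hh : h < m) : next m (h :: t) = (h + 1) :: t := by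
  simp [next, hh]

theorem next_self_cons_of_next_eq_cons {m x : ℕ} {t t' : List ℕ} (ht : next m t = x :: t') :
    next m (m :: t) = x :: x :: t' := by
  simp [next, ht]

theorem stmt_10 (m : ℕ) (L : List ℕ) (n k : ℕ) (hk : k < m) :
    next m (List.replicate n m ++ (k :: L)) = List.replicate (n + 1) (k + 1) ++ L := by
  induction n with
  | zero => exact next_cons_of_lt L hk
  | succ n ih =>
    rw [List.replicate_succ, List.cons_append] at ih
    exact next_self_cons_of_next_eq_cons ih
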